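/- For $\lambda>1$ and all exponents $0<p,q,r<\infty$, $\beta\in\mathbb{R}$, every measurable $f$ on $\mathbb{R}^{d+1}_+$ satisfies the change-of-angle inequality $\Big(\int_0^\infty\Big\|\Big(\fint_{t/2}^t t^{-d}\int_{B(\cdot,\lambda t)}|s^{-\beta}f(s,y)|^r\,dy\,ds\Big)^{1/r}\Big\|_{L^p}^q\frac{dt}{t}\Big)^{1/q}\le C\,\lambda^{d/\min\{p,r\}}\,\|f\|_{Z^{p,q,r}_\beta}$ with $C$ depending only on $p,r,d$. -/

import Mathlib

open MeasureTheory Set ENNReal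

noncomputable section

abbrev Ed (d : ℕ) : Type := EuclideanSpace ℝ (Fin d)

/-- The Whitney box `W(t,x) = (t/2, t) × B(x,t)` in the upper half-space. -/
def WBox (d : ℕ) (t : ℝ) (x : Ed d) : Set (ℝ × Ed d) := Ioo (t/2) t ×ˢ Metric.ball x t

/-- Whitney average `(⨍⨍_{W(t,x)} |s^{-β} f(s,y)|^r dy ds)^{1/r}` (ENNReal-valued). -/
noncomputable def wAvg (d : ℕ) (r β : ℝ) (f : ℝ × Ed d → ℝ) (t : ℝ) (x : Ed d) : ℝ≥0∞ :=
  ((∫⁻ pt in WBox d t x, (ENNReal.ofReal (pt.1 ^ (-β)) * ENNReal.ofReal |f pt|) ^ r)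
      / volume (WBox d t x)) ^ (1 / r)

/-- The quasi-norm of the space `Z^{p,q,r}_β`. -/
noncomputable def Znorm (d : ℕ) (p q r β : ℝ) (f : ℝ × Ed d → ℝ) : ℝ≥0∞ :=
  (∫⁻ t in Ioi (0 : ℝ),
      ((∫⁻ x, wAvg d r β f t x ^ p) ^ (1 / p)) ^ q * ENNReal.ofReal t⁻¹) ^ (1 / q)

/-- The "changed angle" version of the `Z`-quasi-norm, where the Whitney average uses
the enlarged ball `B(x, λt)` but keeps the normalization `t^{-d}` of the unit-angle box:
`(⨍_{t/2}^t t^{-d} ∫_{B(x,λt)} |s^{-β} f|^r dy ds)^{1/r}`. -/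
noncomputable def wAvgAngle (d : ℕ) (lam r β : ℝ) (f : ℝ × Ed d → ℝ) (t : ℝ) (x : Ed d) :
    ℝ≥0∞ :=
  ((∫⁻ pt in Ioo (t / 2) t ×ˢ Metric.ball x (lam * t),
        (ENNReal.ofReal (pt.1 ^ (-β)) * ENNReal.ofReal |f pt|) ^ r)
      / ENNReal.ofReal ((t / 2) * t ^ d)) ^ (1 / r)

noncomputable def ZnormAngle (d : ℕ) (lam p q r β : ℝ) (f : ℝ × Ed d → ℝ) : ℝ≥0∞ :=
  (∫⁻ t in Ioi (0 : ℝ),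
      ((∫⁻ x, wAvgAngle d lam r β f t x ^ p) ^ (1 / p)) ^ q * ENNReal.ofReal t⁻¹) ^ (1 / q)

/-!
Fix `t`. A volume-packing argument covers `B(0, λ)` by `N ≤ 5^d λ^d` unit balls `B(v, 1)`;
scaling by `t` covers the enlarged box `(t/2, t) × B(x, λt)` by the Whitney boxes
`W(t, x + t v)`, so the `r`-th power of the changed-angle average at `x` is at most `|B(0,1)|`
times the sum of the `r`-th powers of the Whitney averages at the points `x + t v`. With
`m = min p r`, raising to the power `m / r ≤ 1` is subadditive and `L^{p/m}` is a normed space,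
so Minkowski's inequality and translation invariance give, for the `L^p` quasi-norms in `x`,
a factor `N^{1/m} |B(0,1)|^{1/r} ≲ λ^{d/m}`. This bound is uniform in `t`, hence survives the
`dt/t` integration.
-/

open Metric Function NNReal

section Packing

variable {X : Type*} [PseudoEMetricSpace X] {ε : ℝ≥0} {A : Set X}

theorem Metric.packingNumber_le_of_forall_finset_card_le {N : ℕ}
    (h : ∀ s : Finset X, (s : Set X) ⊆ A → IsSeparated ε (s : Set X) → s.card ≤ N) :
    packingNumber ε A ≤ N := by
  refine iSup_le fun C => iSup_le fun hC => iSup_le fun hsep => ?_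
  by_contra! hlt
  obtain ⟨s, hsC, hs⟩ := exists_subset_encard_eq (Order.add_one_le_of_lt hlt)
  have hfin : s.Finite := finite_of_encard_eq_coe hs
  have hcard := h hfin.toFinset (by simpa using hsC.trans hC) (by simpa using hsep.subset hsC)
  rw [← ncard_eq_toFinset_card s hfin, ← ENat.natCast_le_natCast, hfin.cast_ncard_eq, hs]
    at hcard
  exact Nat.not_succ_le_self N (by exact_mod_cast hcard)

theorem Metric.exists_finset_isSeparated_isCover (h : packingNumber ε A ≠ ⊤) :
    ∃ S : Finset X, (S : Set X) ⊆ A ∧ IsSeparated ε (S : Set X) ∧ IsCover ε A S := by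
  have hfin : (maximalSeparatedSet ε A).Finite :=
    encard_ne_top_iff.1 (encard_maximalSeparatedSet h ▸ h)
  exact ⟨hfin.toFinset, by simpa using maximalSeparatedSet_subset,
    by simpa using isSeparated_maximalSeparatedSet, by simpa using isCover_maximalSeparatedSet h⟩

end Packing

section Covering

variable {E : Type*} [NormedAddCommGroup E] [NormedSpace ℝ E] [FiniteDimensional ℝ E]

theorem card_le_of_isSeparated_of_subset_ball (s : Finset E) {R ε : ℝ} (hR : 0 ≤ R)
    (hε : 0 < ε) (hs : (s : Set E) ⊆ ball 0 R)
    (hsep : IsSeparated (ENNReal.ofReal ε) (s : Set E)) :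
    (s.card : ℝ) ≤ ((2 * R + ε) / ε) ^ Module.finrank ℝ E := by
  borelize E
  set μ : Measure E := Measure.addHaar
  have hε₂ : 0 < ε / 2 := half_pos hε
  have hdisj : (s : Set E).Pairwise (Disjoint on fun c => ball c (ε / 2)) := by
    intro c hc c' hc' hne
    refine ball_disjoint_ball ?_
    have : ENNReal.ofReal ε < edist c c' := hsep hc hc' hne
    rw [edist_dist, ENNReal.ofReal_lt_ofReal_iff_of_nonneg hε.le] at this
    linarith
  have hsub : (⋃ c ∈ s, ball c (ε / 2)) ⊆ ball (0 : E) (R + ε / 2) :=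
    iUnion₂_subset fun c hc => ball_subset_ball' (by
      have := mem_ball_zero_iff.1 (hs hc); rw [dist_zero_right]; linarith)
  have hvol : (s.card : ℝ≥0∞) * ENNReal.ofReal ((ε / 2) ^ Module.finrank ℝ E) * μ (ball 0 1)
      ≤ ENNReal.ofReal ((R + ε / 2) ^ Module.finrank ℝ E) * μ (ball 0 1) := calc
    _ = μ (⋃ c ∈ s, ball c (ε / 2)) := by
      rw [measure_biUnion_finset hdisj fun c _ => measurableSet_ball]
      simp only [μ.addHaar_ball_of_pos _ hε₂, Finset.sum_const, nsmul_eq_mul, mul_assoc]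
    _ ≤ μ (ball 0 (R + ε / 2)) := measure_mono hsub
    _ = _ := μ.addHaar_ball_of_pos _ (by linarith)
  have hcard := ENNReal.toReal_le_of_le_ofReal (by positivity)
    ((ENNReal.mul_le_mul_iff_left (measure_ball_pos μ 0 one_pos).ne'
      measure_ball_lt_top.ne).1 hvol)
  rw [ENNReal.toReal_mul, ENNReal.toReal_ofReal (by positivity), ENNReal.toReal_natCast,
    ← le_div_iff₀ (by positivity), ← div_pow] at hcard
  rwa [show (R + ε / 2) / (ε / 2) = (2 * R + ε) / ε by field_simp] at hcard

theorem exists_finset_ball_cover_of_one_le {R : ℝ} (hR : 1 ≤ R) :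
    ∃ S : Finset E, (S.card : ℝ) ≤ 5 ^ Module.finrank ℝ E * R ^ Module.finrank ℝ E ∧
      ball (0 : E) R ⊆ ⋃ v ∈ S, ball v 1 := by
  have hcard : ∀ s : Finset E, (s : Set E) ⊆ ball 0 R →
      IsSeparated ((1 / 2 : ℝ≥0) : ℝ≥0∞) (s : Set E) →
      (s.card : ℝ) ≤ 5 ^ Module.finrank ℝ E * R ^ Module.finrank ℝ E := by
    intro s hs hsep
    refine (card_le_of_isSeparated_of_subset_ball s (by linarith) (by norm_num : (0 : ℝ) < 1 / 2)
      hs (by simpa using hsep)).trans ?_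
    rw [← mul_pow]
    gcongr
    linarith
  obtain ⟨S, hS_sub, hS_sep, hS_cover⟩ := exists_finset_isSeparated_isCover
    (ne_top_of_le_ne_top (ENat.natCast_ne_top _)
      (packingNumber_le_of_forall_finset_card_le fun s hs hsep => Nat.le_floor (hcard s hs hsep)))
  refine ⟨S, hcard S hS_sub hS_sep, fun x hx => ?_⟩
  obtain ⟨v, hvS, hxv⟩ := hS_cover hx
  have hxv : edist x v ≤ (1 / 2 : ℝ≥0) := hxv
  rw [edist_nndist, ENNReal.coe_le_coe] at hxv
  refine mem_iUnion₂.2 ⟨v, hvS, mem_ball.2 ?_⟩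
  rw [dist_nndist]
  exact (NNReal.coe_le_coe.2 hxv).trans_lt (by norm_num)

end Covering

theorem lintegral_biUnion_finset_le {α ι : Type*} [MeasurableSpace α] (μ : Measure α)
    (S : Finset ι) (A : ι → Set α) (g : α → ℝ≥0∞) :
    ∫⁻ x in ⋃ i ∈ S, A i, g x ∂μ ≤ ∑ i ∈ S, ∫⁻ x in A i, g x ∂μ := by
  classical
  induction S using Finset.induction_on with
  | empty => simp
  | insert a S ha ih =>
    rw [Finset.set_biUnion_insert, Finset.sum_insert ha]
    exact (lintegral_union_le _ _ _).trans (add_le_add le_rfl ih)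

theorem ENNReal.rpow_sum_le_sum_rpow {ι : Type*} (S : Finset ι) (a : ι → ℝ≥0∞) {θ : ℝ}
    (hθ₀ : 0 < θ) (hθ₁ : θ ≤ 1) : (∑ i ∈ S, a i) ^ θ ≤ ∑ i ∈ S, a i ^ θ := by
  classical
  induction S using Finset.induction_on with
  | empty => simp [ENNReal.zero_rpow_of_pos hθ₀]
  | insert b S hb ih =>
    rw [Finset.sum_insert hb, Finset.sum_insert hb]
    exact (ENNReal.rpow_add_le_add_rpow _ _ hθ₀.le hθ₁).trans (add_le_add le_rfl ih)

theorem ENNReal.lintegral_Lp_sum_le {α ι : Type*} [MeasurableSpace α] {μ : Measure α}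
    (S : Finset ι) {u : ι → α → ℝ≥0∞} (hu : ∀ i, AEMeasurable (u i) μ) {s : ℝ} (hs : 1 ≤ s) :
    (∫⁻ x, (∑ i ∈ S, u i x) ^ s ∂μ) ^ (1 / s) ≤ ∑ i ∈ S, (∫⁻ x, u i x ^ s ∂μ) ^ (1 / s) := by
  classical
  induction S using Finset.induction_on with
  | empty => simp [ENNReal.zero_rpow_of_pos, zero_lt_one.trans_le hs]
  | insert b S hb ih =>
    simp only [Finset.sum_insert hb]
    exact (ENNReal.lintegral_Lp_add_le (hu b) (Finset.aemeasurable_fun_sum _ fun i _ => hu i)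
      hs).trans (add_le_add le_rfl ih)

theorem lowerSemicontinuous_setLIntegral_prod_ball {α E : Type*} [MeasurableSpace α]
    [PseudoMetricSpace E] [MeasurableSpace E] (μ : Measure (α × E)) (s : Set α)
    (g : α × E → ℝ≥0∞) (ρ : ℝ) :
    LowerSemicontinuous fun x : E => ∫⁻ p in s ×ˢ ball x ρ, g p ∂μ := by
  intro x c hc
  dsimp only at hc ⊢
  have hmono : Monotone fun n : ℕ => s ×ˢ ball x (ρ - 1 / (n + 1)) := fun m n hmn =>
    prod_mono_right (ball_subset_ball (by gcongr))
  have hunion : s ×ˢ ball x ρ = ⋃ n : ℕ, s ×ˢ ball x (ρ - 1 / (n + 1)) := by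
    rw [← prod_iUnion]
    congr 1
    ext y
    simp only [mem_iUnion, mem_ball]
    refine ⟨fun hy => ?_, fun ⟨n, hn⟩ => hn.trans_le (by simp; positivity)⟩
    obtain ⟨n, hn⟩ := exists_nat_one_div_lt (sub_pos.2 hy)
    exact ⟨n, by linarith⟩
  rw [hunion, setLIntegral_iUnion_of_directed _ hmono.directed_le] at hc
  obtain ⟨n, hn⟩ := lt_iSup_iff.1 hc
  filter_upwards [ball_mem_nhds x (Nat.one_div_pos_of_nat (α := ℝ) (n := n))] with y hy
  refine hn.trans_le (lintegral_mono_set (prod_mono_right fun z hz => ?_))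
  rw [mem_ball] at hy hz ⊢
  linarith [dist_triangle z x y, dist_comm x y]

theorem lintegral_rpow_le_of_le_sum_add {G ι : Type*} [MeasurableSpace G] [AddGroup G]
    [MeasurableAdd G] {μ : Measure G} [μ.IsAddRightInvariant] {F H : G → ℝ≥0∞}
    (hH : Measurable H) (S : Finset ι) (a : ι → G) {c : ℝ≥0∞} (hc : c ≠ ∞) {m p : ℝ}
    (hm : 0 < m) (hmp : m ≤ p) (hF : ∀ x, F x ^ m ≤ c * ∑ i ∈ S, H (x + a i) ^ m) :
    (∫⁻ x, F x ^ p ∂μ) ^ (1 / p) ≤ (c * S.card) ^ (1 / m) * (∫⁻ x, H x ^ p ∂μ) ^ (1 / p) := by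
  set s := p / m
  have hs : 1 ≤ s := (one_le_div hm).2 hmp
  have hpow : ∀ b : ℝ≥0∞, (b ^ m) ^ s = b ^ p := fun b => by
    rw [← ENNReal.rpow_mul, mul_div_cancel₀ _ hm.ne']
  have hroot : ∀ b : ℝ≥0∞, (b ^ (1 / s)) ^ (1 / m) = b ^ (1 / p) := fun b => by
    rw [← ENNReal.rpow_mul]
    congr 1
    simp only [s]
    field_simp
  have htranslate : ∀ i, (∫⁻ x, (c * H (x + a i) ^ m) ^ s ∂μ) ^ (1 / s)
      = c * (∫⁻ x, H x ^ p ∂μ) ^ (1 / s) := fun i => by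
    simp_rw [ENNReal.mul_rpow_of_nonneg _ _ (by positivity : 0 ≤ s), hpow]
    rw [lintegral_const_mul' _ _ (ENNReal.rpow_ne_top_of_nonneg (by positivity) hc),
      lintegral_add_right_eq_self (fun x => H x ^ p) (a i),
      ENNReal.mul_rpow_of_nonneg _ _ (by positivity), ← ENNReal.rpow_mul,
      mul_one_div_cancel (by positivity), ENNReal.rpow_one]
  calc (∫⁻ x, F x ^ p ∂μ) ^ (1 / p)
      = ((∫⁻ x, (F x ^ m) ^ s ∂μ) ^ (1 / s)) ^ (1 / m) := by simp_rw [hpow, hroot]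
    _ ≤ ((∫⁻ x, (∑ i ∈ S, c * H (x + a i) ^ m) ^ s ∂μ) ^ (1 / s)) ^ (1 / m) := by
      gcongr with x
      rw [← Finset.mul_sum]
      exact hF x
    _ ≤ (∑ i ∈ S, (∫⁻ x, (c * H (x + a i) ^ m) ^ s ∂μ) ^ (1 / s)) ^ (1 / m) := by
      gcongr
      exact ENNReal.lintegral_Lp_sum_le S (fun i => (measurable_const.mul
        ((hH.comp (measurable_add_const (a i))).pow_const m)).aemeasurable) hs
    _ = (c * S.card) ^ (1 / m) * (∫⁻ x, H x ^ p ∂μ) ^ (1 / p) := by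
      rw [Finset.sum_congr rfl fun i _ => htranslate i, Finset.sum_const, nsmul_eq_mul,
        ← mul_assoc, mul_comm (S.card : ℝ≥0∞), ENNReal.mul_rpow_of_nonneg _ _ (by positivity),
        hroot]

theorem lintegral_rpow_mul_le_of_le_const_mul {α : Type*} [MeasurableSpace α] {μ : Measure α}
    {A B w : α → ℝ≥0∞} {K : ℝ≥0∞} (hK : K ≠ ∞) {q : ℝ} (hq : 0 < q)
    (h : ∀ᵐ t ∂μ, A t ≤ K * B t) :
    (∫⁻ t, A t ^ q * w t ∂μ) ^ (1 / q) ≤ K * (∫⁻ t, B t ^ q * w t ∂μ) ^ (1 / q) := by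
  calc (∫⁻ t, A t ^ q * w t ∂μ) ^ (1 / q)
      ≤ (∫⁻ t, K ^ q * (B t ^ q * w t) ∂μ) ^ (1 / q) := by
        gcongr ?_ ^ _
        refine lintegral_mono_ae (h.mono fun t ht => ?_)
        rw [← mul_assoc, ← ENNReal.mul_rpow_of_nonneg _ _ hq.le]
        gcongr
    _ = K * (∫⁻ t, B t ^ q * w t ∂μ) ^ (1 / q) := by
      rw [lintegral_const_mul' _ _ (ENNReal.rpow_ne_top_of_nonneg hq.le hK),
        ENNReal.mul_rpow_of_nonneg _ _ (by positivity), ← ENNReal.rpow_mul,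
        mul_one_div_cancel hq.ne', ENNReal.rpow_one]

theorem ball_mul_subset_biUnion_ball {E : Type*} [NormedAddCommGroup E] [NormedSpace ℝ E]
    {R t : ℝ} (ht : 0 < t) {S : Finset E} (hS : ball (0 : E) R ⊆ ⋃ v ∈ S, ball v 1) (x : E) :
    ball x (R * t) ⊆ ⋃ v ∈ S, ball (x + t • v) t := by
  intro y hy
  have hw : t⁻¹ • (y - x) ∈ ball (0 : E) R := by
    rw [mem_ball_zero_iff, norm_smul, norm_inv, Real.norm_of_nonneg ht.le, ← dist_eq_norm,
      inv_mul_lt_iff₀ ht, mul_comm]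
    exact hy
  obtain ⟨v, hvS, hv⟩ := mem_iUnion₂.1 (hS hw)
  refine mem_iUnion₂.2 ⟨v, hvS, ?_⟩
  have hdist : y - (x + t • v) = t • (t⁻¹ • (y - x) - v) := by
    rw [smul_sub, smul_inv_smul₀ ht.ne']
    abel
  rw [mem_ball, dist_eq_norm, hdist, norm_smul, Real.norm_of_nonneg ht.le, ← dist_eq_norm]
  exact mul_lt_of_lt_one_right ht (mem_ball.1 hv)

section WhitneyBox

variable {d : ℕ} {t : ℝ}

theorem volume_WBox (ht : 0 < t) (x : Ed d) :
    volume (WBox d t x) = ENNReal.ofReal (t / 2 * t ^ d) * volume (ball (0 : Ed d) 1) := by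
  rw [WBox, Measure.volume_eq_prod, Measure.prod_prod, Real.volume_Ioo,
    Measure.addHaar_ball_of_pos volume x ht, finrank_euclideanSpace_fin,
    ENNReal.ofReal_mul (by positivity), mul_assoc, show t - t / 2 = t / 2 by ring]

theorem measurable_wAvg (r β : ℝ) (f : ℝ × Ed d → ℝ) (ht : 0 < t) :
    Measurable (wAvg d r β f t) := by
  show Measurable fun x => wAvg d r β f t x
  simp only [wAvg, volume_WBox ht]
  exact ((lowerSemicontinuous_setLIntegral_prod_ball _ _ _ t).measurable.div_const _).pow_const _

theorem wAvgAngle_rpow_le {r : ℝ} (hr : 0 < r) (lam β : ℝ) (f : ℝ × Ed d → ℝ) (ht : 0 < t)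
    {S : Finset (Ed d)} (hS : ball (0 : Ed d) lam ⊆ ⋃ v ∈ S, ball v 1) (x : Ed d) :
    wAvgAngle d lam r β f t x ^ r
      ≤ volume (ball (0 : Ed d) 1) * ∑ v ∈ S, wAvg d r β f t (x + t • v) ^ r := by
  set g : ℝ × Ed d → ℝ≥0∞ := fun p => (ENNReal.ofReal (p.1 ^ (-β)) * ENNReal.ofReal |f p|) ^ r
  set W := ENNReal.ofReal (t / 2 * t ^ d)
  set c := volume (ball (0 : Ed d) 1)
  have hc₀ : c ≠ 0 := (measure_ball_pos volume 0 one_pos).ne'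
  have hc : c ≠ ∞ := measure_ball_lt_top.ne
  have hcover : Ioo (t / 2) t ×ˢ ball x (lam * t) ⊆ ⋃ v ∈ S, WBox d t (x + t • v) := by
    simp only [WBox, ← prod_iUnion₂]
    exact prod_mono_right (ball_mul_subset_biUnion_ball ht hS x)
  simp only [wAvgAngle, wAvg, volume_WBox ht, one_div, ENNReal.rpow_inv_rpow hr.ne']
  calc (∫⁻ p in Ioo (t / 2) t ×ˢ ball x (lam * t), g p) / W
      ≤ (∑ v ∈ S, ∫⁻ p in WBox d t (x + t • v), g p) / W := by
        gcongr
        exact (lintegral_mono_set hcover).trans (lintegral_biUnion_finset_le _ _ _ _)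
    _ = c * ∑ v ∈ S, (∫⁻ p in WBox d t (x + t • v), g p) / (W * c) := by
        rw [Finset.mul_sum, div_eq_mul_inv, Finset.sum_mul]
        refine Finset.sum_congr rfl fun v _ => ?_
        rw [← mul_div_assoc, mul_comm c, ENNReal.mul_div_mul_right _ _ hc₀ hc, div_eq_mul_inv]

end WhitneyBox

-- `5 ^ (d / m)` comes from the number of unit balls covering `B(0, λ)`, and `|B(0,1)| ^ (1 / r)`
-- from the two normalizations `|W(t,x)| = (t / 2) t^d |B(0,1)|` and `(t / 2) t^d`.
def changeOfAngleConst (d : ℕ) (p r : ℝ) : ℝ :=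
  5 ^ ((d : ℝ) / min p r) * (volume (ball (0 : Ed d) 1)).toReal ^ (1 / r)

theorem changeOfAngleConst_pos (d : ℕ) (p r : ℝ) : 0 < changeOfAngleConst d p r :=
  mul_pos (by positivity) (Real.rpow_pos_of_pos (ENNReal.toReal_pos
    (measure_ball_pos volume 0 one_pos).ne' measure_ball_lt_top.ne) _)

theorem volume_ball_rpow_mul_card_rpow_le {d : ℕ} {p r lam : ℝ} (hp : 0 < p) (hr : 0 < r)
    (hlam : 0 ≤ lam) {S : Finset (Ed d)} (hS_card : (S.card : ℝ) ≤ 5 ^ d * lam ^ d) :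
    (volume (ball (0 : Ed d) 1) ^ (min p r / r) * S.card) ^ (1 / min p r)
      ≤ ENNReal.ofReal (changeOfAngleConst d p r * lam ^ ((d : ℝ) / min p r)) := by
  set m := min p r
  have hm : 0 < m := lt_min hp hr
  set c := volume (ball (0 : Ed d) 1)
  have hc : c ≠ ∞ := measure_ball_lt_top.ne
  have hS_card' : (S.card : ℝ≥0∞) ≤ ENNReal.ofReal (5 ^ d * lam ^ d) := by
    rw [← ENNReal.ofReal_natCast]
    exact ENNReal.ofReal_le_ofReal hS_card
  calc (c ^ (m / r) * S.card) ^ (1 / m)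
      ≤ ENNReal.ofReal (c.toReal ^ (m / r) * (5 ^ d * lam ^ d)) ^ (1 / m) := by
        rw [ENNReal.ofReal_mul (by positivity), ← ENNReal.ofReal_rpow_of_nonneg (by positivity)
          (by positivity), ENNReal.ofReal_toReal hc]
        gcongr
    _ = ENNReal.ofReal (changeOfAngleConst d p r * lam ^ ((d : ℝ) / m)) := by
        rw [ENNReal.ofReal_rpow_of_nonneg (by positivity) (by positivity), changeOfAngleConst]
        congr 1
        rw [Real.mul_rpow (by positivity) (by positivity), Real.mul_rpow (by positivity)
          (by positivity), ← Real.rpow_mul ENNReal.toReal_nonneg, ← Real.rpow_natCast,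
          ← Real.rpow_natCast, ← Real.rpow_mul (by norm_num), ← Real.rpow_mul (by positivity)]
        field_simp
        ring

theorem lintegral_wAvgAngle_rpow_le {d : ℕ} {p r lam t : ℝ} (hp : 0 < p) (hr : 0 < r)
    (hlam : 1 ≤ lam) (ht : 0 < t) (β : ℝ) (f : ℝ × Ed d → ℝ) :
    (∫⁻ x, wAvgAngle d lam r β f t x ^ p) ^ (1 / p)
      ≤ ENNReal.ofReal (changeOfAngleConst d p r * lam ^ ((d : ℝ) / min p r))
        * (∫⁻ x, wAvg d r β f t x ^ p) ^ (1 / p) := by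
  set m := min p r
  have hm : 0 < m := lt_min hp hr
  set c := volume (ball (0 : Ed d) 1)
  have hc : c ≠ ∞ := measure_ball_lt_top.ne
  obtain ⟨S, hS_card, hS⟩ := exists_finset_ball_cover_of_one_le (E := Ed d) hlam
  rw [finrank_euclideanSpace_fin] at hS_card
  -- `m ≤ r` makes `a ↦ a ^ (m / r)` subadditive, `m ≤ p` makes `L^(p/m)` a normed space
  have hpoint : ∀ x, wAvgAngle d lam r β f t x ^ m
      ≤ c ^ (m / r) * ∑ v ∈ S, wAvg d r β f t (x + t • v) ^ m := fun x => calc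
    _ = (wAvgAngle d lam r β f t x ^ r) ^ (m / r) := by
      rw [← ENNReal.rpow_mul, mul_div_cancel₀ _ hr.ne']
    _ ≤ (c * ∑ v ∈ S, wAvg d r β f t (x + t • v) ^ r) ^ (m / r) := by
      gcongr
      exact wAvgAngle_rpow_le hr lam β f ht hS x
    _ ≤ c ^ (m / r) * ∑ v ∈ S, wAvg d r β f t (x + t • v) ^ m := by
      rw [ENNReal.mul_rpow_of_nonneg _ _ (by positivity)]
      gcongr
      refine (ENNReal.rpow_sum_le_sum_rpow S _ (by positivity)
        ((div_le_one hr).2 (min_le_right p r))).trans_eq (Finset.sum_congr rfl fun v _ => ?_)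
      rw [← ENNReal.rpow_mul, mul_div_cancel₀ _ hr.ne']
  refine (lintegral_rpow_le_of_le_sum_add (measurable_wAvg r β f ht) S (t • ·)
    (ENNReal.rpow_ne_top_of_nonneg (by positivity) hc) hm (min_le_left p r) hpoint).trans ?_
  gcongr
  exact volume_ball_rpow_mul_card_rpow_le hp hr (by linarith) hS_card

/-- change of angle. For `λ > 1` the `Z`-quasi-norm with Whitney averages
over the enlarged balls `B(x, λt)` (normalized by `t^{-d}`) is controlled by
`C λ^{d / min(p,r)}` times the `Z^{p,q,r}_β`-quasi-norm, with `C = C(p,r,d)`. -/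
theorem change_of_angle (d : ℕ) (p r : ℝ) (hp : 0 < p) (hr : 0 < r) :
    ∃ C : ℝ, 0 < C ∧ ∀ (q β lam : ℝ), 0 < q → 1 < lam → ∀ f : ℝ × Ed d → ℝ,
      ZnormAngle d lam p q r β f
        ≤ ENNReal.ofReal (C * lam ^ ((d : ℝ) / min p r)) * Znorm d p q r β f := by
  refine ⟨changeOfAngleConst d p r, changeOfAngleConst_pos d p r, fun q β lam hq hlam f => ?_⟩
  exact lintegral_rpow_mul_le_of_le_const_mul ENNReal.ofReal_ne_top hq
    ((ae_restrict_iff' measurableSet_Ioi).2 (Filter.Eventually.of_forall fun t ht =>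
      lintegral_wAvgAngle_rpow_le hp hr hlam.le ht β f))

end
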